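/- arXiv:1201.1579 — 2 statements merged into one kernel-verified Lean document; each statement's English description precedes it below -/
import Mathlib

section
/- Let g and h be polynomials over ℂ in variables x, y₁, …, y_{n-1}, let a₀, a₁, …, a_{n-1} be integers (weights) and ℓ an integer, and suppose g satisfies the weighted Euler relation a₀·x·∂g/∂x + Σᵢ aᵢ·yᵢ·∂g/∂yᵢ = ℓ·g. Then the following two polynomial identities hold: (1) ℓ·(-g - 2x·∂g/∂x) + (2ℓ + a₀)·x·∂g/∂x + Σᵢ aᵢ·yᵢ·∂g/∂yᵢ = 0; and (2) ℓ·(-4h - 2x·∂h/∂x) + 2(2ℓ + a₀)·g·∂g/∂x + Σᵢ aᵢ·yᵢ·∂h/∂yᵢ = -(2ℓ + a₀)·∂(xh - g²)/∂x - δ(h), where δ(h) = (2ℓ - a₀)·h - a₀·x·∂h/∂x - Σᵢ aᵢ·yᵢ·∂h/∂yᵢ. -/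
open MvPolynomial

/-- Let g, h be polynomials over ℂ in variables x = X 0 and yᵢ = X i.succ,
with integer weights a₀ = a 0, aᵢ = a i.succ and ℓ, and suppose g satisfies the
weighted Euler relation a₀·x·g_x + Σᵢ aᵢ·yᵢ·g_{yᵢ} = ℓ·g.  Then:
(1) ℓ·(-g - 2x·g_x) + (2ℓ + a₀)·x·g_x + Σᵢ aᵢ·yᵢ·g_{yᵢ} = 0; and
(2) ℓ·(-4h - 2x·h_x) + 2(2ℓ + a₀)·g·g_x + Σᵢ aᵢ·yᵢ·h_{yᵢ}
      = -(2ℓ + a₀)·∂(xh - g²)/∂x - δ(h),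
where δ(h) = (2ℓ - a₀)·h - a₀·x·h_x - Σᵢ aᵢ·yᵢ·h_{yᵢ}. -/
theorem stmt_2 (n : ℕ) (g h : MvPolynomial (Fin (n + 1)) ℂ)
    (a : Fin (n + 1) → ℤ) (ℓ : ℤ)
    (euler : (a 0 : MvPolynomial (Fin (n + 1)) ℂ) * X 0 * pderiv 0 g +
      ∑ i : Fin n, (a i.succ : MvPolynomial (Fin (n + 1)) ℂ) * X i.succ * pderiv i.succ g
      = (ℓ : MvPolynomial (Fin (n + 1)) ℂ) * g) :
    ((ℓ : MvPolynomial (Fin (n + 1)) ℂ) * (-g - 2 * X 0 * pderiv 0 g) +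
      ((2 * ℓ + a 0 : ℤ) : MvPolynomial (Fin (n + 1)) ℂ) * (X 0 * pderiv 0 g) +
      ∑ i : Fin n, (a i.succ : MvPolynomial (Fin (n + 1)) ℂ) * X i.succ * pderiv i.succ g
      = 0)
    ∧
    ((ℓ : MvPolynomial (Fin (n + 1)) ℂ) * (-4 * h - 2 * X 0 * pderiv 0 h) +
      2 * ((2 * ℓ + a 0 : ℤ) : MvPolynomial (Fin (n + 1)) ℂ) * (g * pderiv 0 g) +
      ∑ i : Fin n, (a i.succ : MvPolynomial (Fin (n + 1)) ℂ) * X i.succ * pderiv i.succ h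
      = -(((2 * ℓ + a 0 : ℤ) : MvPolynomial (Fin (n + 1)) ℂ) * pderiv 0 (X 0 * h - g ^ 2))
        - (((2 * ℓ - a 0 : ℤ) : MvPolynomial (Fin (n + 1)) ℂ) * h
            - (a 0 : MvPolynomial (Fin (n + 1)) ℂ) * X 0 * pderiv 0 h
            - ∑ i : Fin n,
                (a i.succ : MvPolynomial (Fin (n + 1)) ℂ) * X i.succ * pderiv i.succ h)) := by
  constructor
  · have h1 : ∑ i : Fin n, (a i.succ : MvPolynomial (Fin (n + 1)) ℂ) * X i.succ * pderiv i.succ g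
        = (ℓ : MvPolynomial (Fin (n + 1)) ℂ) * g
          - (a 0 : MvPolynomial (Fin (n + 1)) ℂ) * X 0 * pderiv 0 g := by
      rw [← euler]; ring
    rw [h1]
    push_cast
    ring
  · have h2 : pderiv 0 (X 0 * h - g ^ 2)
        = h + X 0 * pderiv 0 h - 2 * g * pderiv 0 g := by
      simp [pderiv_mul, pderiv_pow]
      ring
    rw [h2]
    push_cast
    ring
end

section
/- In ℂ⁶ with coordinates (a,b,c,d,e,f), the set-theoretic intersection V(abd) ∩ V((be - cd)(af - be + cd)) equals V(a, be - cd) ∪ V(b, cd(af + cd)) ∪ V(d, be(af - be)); i.e., for all complex numbers a,…,f: (abd = 0 ∧ (be - cd)(af - be + cd) = 0) ↔ ((a = 0 ∧ be - cd = 0) ∨ (b = 0 ∧ cd(af + cd) = 0) ∨ (d = 0 ∧ be(af - be) = 0)). -/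
/-- In ℂ⁶, V(abd) ∩ V((be - cd)(af - be + cd))
= V(a, be - cd) ∪ V(b, cd(af + cd)) ∪ V(d, be(af - be)). -/
theorem stmt_14 (a b c d e f : ℂ) :
    (a * b * d = 0 ∧ (b * e - c * d) * (a * f - b * e + c * d) = 0) ↔
      ((a = 0 ∧ b * e - c * d = 0) ∨
        (b = 0 ∧ c * d * (a * f + c * d) = 0) ∨
        (d = 0 ∧ b * e * (a * f - b * e) = 0)) := by
  constructor
  · rintro ⟨h1, h2⟩
    rcases mul_eq_zero.1 h1 with h | hd
    · rcases mul_eq_zero.1 h with ha | hb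
      · rcases mul_eq_zero.1 h2 with h3 | h3
        · exact Or.inl ⟨ha, h3⟩
        · exact Or.inl ⟨ha, by subst ha; linear_combination -h3⟩
      · rcases mul_eq_zero.1 h2 with h3 | h3
        · exact Or.inr (Or.inl ⟨hb, by subst hb; linear_combination (-(a*f) - c*d) * h3⟩)
        · exact Or.inr (Or.inl ⟨hb, by subst hb; linear_combination (c*d) * h3⟩)
    · rcases mul_eq_zero.1 h2 with h3 | h3
      · exact Or.inr (Or.inr ⟨hd, by subst hd; linear_combination (a*f - b*e) * h3⟩)
      · exact Or.inr (Or.inr ⟨hd, by subst hd; linear_combination (b*e) * h3⟩)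
  · rintro (⟨ha, h⟩ | ⟨hb, h⟩ | ⟨hd, h⟩)
    · subst ha
      exact ⟨by ring, by linear_combination (c*d - b*e) * h⟩
    · subst hb
      exact ⟨by ring, by linear_combination -h⟩
    · subst hd
      exact ⟨by ring, by linear_combination h⟩
end
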